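/- arXiv:2509.00694 — 2 statements merged into one kernel-verified Lean document; each statement's English description precedes it below -/
import Mathlib

section
/- Under the standing assumptions, ∫_ℝ ‖ω_k‖_{L^∞_y([-1,1])} dk ≲ ν^{-1/2}·𝓓₁^{1/2}. (Fifth estimate of Lemma 3.1.) -/
open MeasureTheory Set Filter Topology
open scoped ENNReal

noncomputable section

/-- `L²` norm over `y ∈ [-1,1]`. -/
def L2y (f : ℝ → ℂ) : ℝ := (∫ y in Set.Icc (-1 : ℝ) 1, ‖f y‖ ^ 2) ^ ((1 : ℝ) / 2)

/-- `L^∞` norm over `y ∈ [-1,1]`. -/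
def Linfy (f : ℝ → ℂ) : ℝ := ⨆ y : Set.Icc (-1 : ℝ) 1, ‖f (y : ℝ)‖

/-- `L²([-1,1])` inner product `⟨f,g⟩ = ∫ conj (f y) * g y dy`. -/
def ipy (f g : ℝ → ℂ) : ℂ :=
  ∫ y in Set.Icc (-1 : ℝ) 1, (starRingEnd ℂ) (f y) * g y

/-- The rate `λ_k`. -/
def lamf (ν k : ℝ) : ℝ :=
  if ν ≤ |k| then ν ^ ((1 : ℝ) / 3) * |k| ^ ((2 : ℝ) / 3) else ν

/-- The weight `α(k)`. -/
def alphf (ν k : ℝ) : ℝ :=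
  if ν ≤ |k| then ν ^ ((2 : ℝ) / 3) * |k| ^ (-((2 : ℝ) / 3)) else 1

/-- The weight `β(k)`. -/
def betaf (ν k : ℝ) : ℝ :=
  if ν ≤ |k| then ν ^ ((1 : ℝ) / 3) * |k| ^ (-((4 : ℝ) / 3)) else 0

/-- The frequency weight `W(k) = e^{2cλ_k t}⟨k⟩^{2m}⟨k⁻¹⟩^{2ε}`. -/
def Wf (ν m ε c t k : ℝ) : ℝ :=
  Real.exp (2 * c * lamf ν k * t) * (1 + k ^ 2) ^ m * (1 + k⁻¹ ^ 2) ^ ε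

/-- `‖∇_k f‖²_{L²} = k²‖f‖²_{L²} + ‖∂_y f‖²_{L²}` (with `df = ∂_y f`). -/
def gradSq (k : ℝ) (f df : ℝ → ℂ) : ℝ :=
  k ^ 2 * (L2y f) ^ 2 + (L2y df) ^ 2

/-- The weighted energy `𝓔`. -/
def EEn (ν m ε c t : ℝ) (ω dω : ℝ → ℝ → ℂ) : ℝ≥0∞ :=
  ∫⁻ k : ℝ, ENNReal.ofReal
    (Wf ν m ε c t k * ((L2y (ω k)) ^ 2 + alphf ν k * (L2y (dω k)) ^ 2))

/-- The dissipation functional `𝓓₁`. -/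
def D1n (ν m ε c t : ℝ) (ω dω : ℝ → ℝ → ℂ) : ℝ≥0∞ :=
  ∫⁻ k : ℝ, ENNReal.ofReal (Wf ν m ε c t k * (ν * gradSq k (ω k) (dω k)))

/-- The dissipation functional `𝓓₂`. -/
def D2n (ν m ε c t : ℝ) (dω d2ω : ℝ → ℝ → ℂ) : ℝ≥0∞ :=
  ∫⁻ k : ℝ, ENNReal.ofReal (Wf ν m ε c t k * (ν * alphf ν k * gradSq k (dω k) (d2ω k)))

/-- The dissipation functional `𝓓₃`. -/
def D3n (ν m ε c t : ℝ) (ω : ℝ → ℝ → ℂ) : ℝ≥0∞ :=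
  ∫⁻ k : ℝ, ENNReal.ofReal (Wf ν m ε c t k * (lamf ν k * (L2y (ω k)) ^ 2))

/-- The dissipation functional `𝓓₄`. -/
def D4n (ν m ε c t : ℝ) (φ dφ : ℝ → ℝ → ℂ) : ℝ≥0∞ :=
  ∫⁻ k : ℝ, ENNReal.ofReal (Wf ν m ε c t k * (k ^ 2 * gradSq k (φ k) (dφ k)))

/-- The dissipation functional `𝓓₅`. -/
def D5n (ν m ε c t : ℝ) (dφ d2φ : ℝ → ℝ → ℂ) : ℝ≥0∞ :=
  ∫⁻ k : ℝ, ENNReal.ofReal (Wf ν m ε c t k * (alphf ν k * k ^ 2 * gradSq k (dφ k) (d2φ k)))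

/-! Because `ω_k(-1) = 0`, `‖ω_k‖_∞ ≤ ∫ |∂_y ω_k| ≤ √2 ‖∂_y ω_k‖_{L²}`, hence
`‖ω_k‖_∞² ≤ 2 ‖∇_k ω_k‖²`. Writing `‖ω_k‖_∞ ≤ (2 / (ν W))^{1/2} (ν W ‖∇_k ω_k‖²)^{1/2}` and
applying Cauchy–Schwarz in `k` bounds `∫ ‖ω_k‖_∞ dk` by `(∫ 2 / (ν W))^{1/2} 𝓓₁^{1/2}`; since
`W(k) ≥ 1 + k²`, the first factor is at most `(2π / ν)^{1/2}`. -/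

lemma measurable_lamf (ν : ℝ) : Measurable (lamf ν) :=
  Measurable.ite (measurableSet_le measurable_const measurable_abs)
    (measurable_const.mul (measurable_abs.pow measurable_const)) measurable_const

lemma lamf_nonneg {ν : ℝ} (hν : 0 ≤ ν) (k : ℝ) : 0 ≤ lamf ν k := by
  unfold lamf
  split <;> positivity

lemma measurable_Wf (ν m ε c t : ℝ) : Measurable (Wf ν m ε c t) :=
  ((((measurable_const.mul (measurable_lamf ν)).mul measurable_const).exp).mul
    ((measurable_const.add (measurable_id.pow_const 2)).pow measurable_const)).mul
    ((measurable_const.add (measurable_inv.pow_const 2)).pow measurable_const)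

lemma one_add_sq_le_Wf {ν m ε c t : ℝ} (hν : 0 ≤ ν) (hm : 1 ≤ m) (hε : 0 ≤ ε)
    (hc : 0 ≤ c) (ht : 0 ≤ t) (k : ℝ) : 1 + k ^ 2 ≤ Wf ν m ε c t k := by
  have hk : 1 ≤ 1 + k ^ 2 := by nlinarith [sq_nonneg k]
  have hexp : 1 ≤ Real.exp (2 * c * lamf ν k * t) :=
    Real.one_le_exp (by have := lamf_nonneg hν k; positivity)
  have hpow : 1 + k ^ 2 ≤ (1 + k ^ 2) ^ m := by
    simpa using Real.rpow_le_rpow_of_exponent_le hk hm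
  have hinv : 1 ≤ (1 + k⁻¹ ^ 2) ^ ε := Real.one_le_rpow (by nlinarith [sq_nonneg k⁻¹]) hε
  calc 1 + k ^ 2 = 1 * (1 + k ^ 2) * 1 := by ring
    _ ≤ Wf ν m ε c t k := by unfold Wf; gcongr

lemma lintegral_ofReal_mul_inv_le_mul_pi {a : ℝ} (ha : 0 ≤ a) {w : ℝ → ℝ}
    (hw : ∀ k, 1 + k ^ 2 ≤ w k) :
    ∫⁻ k, ENNReal.ofReal (a * (w k)⁻¹) ≤ ENNReal.ofReal (a * Real.pi) := calc
  ∫⁻ k, ENNReal.ofReal (a * (w k)⁻¹) ≤ ∫⁻ k, ENNReal.ofReal (a * (1 + k ^ 2)⁻¹) :=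
    lintegral_mono fun k ↦ ENNReal.ofReal_le_ofReal <| by gcongr; exact hw k
  _ = ENNReal.ofReal (a * Real.pi) := by
    rw [← ofReal_integral_eq_lintegral_ofReal (integrable_inv_one_add_sq.const_mul a)
      (Eventually.of_forall fun k ↦ by positivity), integral_const_mul,
      integral_univ_inv_one_add_sq]

lemma lintegral_le_sqrt_mul_sqrt {α : Type*} [MeasurableSpace α] {μ : Measure α}
    {f a b : α → ℝ≥0∞} (ha : AEMeasurable a μ) (hb : AEMeasurable b μ)
    (hfab : ∀ x, f x ^ 2 ≤ a x * b x) :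
    ∫⁻ x, f x ∂μ ≤ (∫⁻ x, a x ∂μ) ^ (1 / 2 : ℝ) * (∫⁻ x, b x ∂μ) ^ (1 / 2 : ℝ) := by
  have hsq (x : ℝ≥0∞) : (x ^ (1 / 2 : ℝ)) ^ (2 : ℝ) = x := by
    rw [← ENNReal.rpow_mul]; norm_num
  have hf (x : α) : f x ≤ a x ^ (1 / 2 : ℝ) * b x ^ (1 / 2 : ℝ) := calc
    f x = (f x ^ 2) ^ (1 / 2 : ℝ) := by rw [← ENNReal.rpow_natCast, ← ENNReal.rpow_mul]; norm_num
    _ ≤ (a x * b x) ^ (1 / 2 : ℝ) := ENNReal.rpow_le_rpow (hfab x) (by norm_num)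
    _ = a x ^ (1 / 2 : ℝ) * b x ^ (1 / 2 : ℝ) := ENNReal.mul_rpow_of_nonneg _ _ (by norm_num)
  calc ∫⁻ x, f x ∂μ ≤ ∫⁻ x, ((fun x ↦ a x ^ (1 / 2 : ℝ)) * fun x ↦ b x ^ (1 / 2 : ℝ)) x ∂μ :=
        lintegral_mono hf
    _ ≤ _ := by
      have := ENNReal.lintegral_mul_le_Lp_mul_Lq μ Real.HolderConjugate.two_two
        (ha.pow_const (1 / 2 : ℝ)) (hb.pow_const (1 / 2 : ℝ))
      simp only [hsq] at this
      exact this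

lemma norm_intervalIntegral_le_setIntegral_Icc {a b y : ℝ} {g : ℝ → ℂ}
    (hg : IntegrableOn g (Icc a b)) (hy : y ∈ Icc a b) :
    ‖∫ s in a..y, g s‖ ≤ ∫ s in Icc a b, ‖g s‖ := calc
  ‖∫ s in a..y, g s‖ ≤ ∫ s in a..y, ‖g s‖ := intervalIntegral.norm_integral_le_integral_norm hy.1
  _ = ∫ s in Ioc a y, ‖g s‖ := intervalIntegral.integral_of_le hy.1
  _ ≤ ∫ s in Icc a b, ‖g s‖ :=
    setIntegral_mono_set hg.norm (Eventually.of_forall fun _ ↦ norm_nonneg _)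
      (Ioc_subset_Icc_self.trans (Icc_subset_Icc le_rfl hy.2)).eventuallyLE

lemma memLp_of_eq_add_intervalIntegral {a b : ℝ} {f g : ℝ → ℂ} (p : ℝ≥0∞)
    (hf : AEStronglyMeasurable f (volume.restrict (Icc a b))) (hg : IntegrableOn g (Icc a b))
    (hfg : ∀ y ∈ Icc a b, f y = f a + ∫ s in a..y, g s) :
    MemLp f p (volume.restrict (Icc a b)) := by
  refine MemLp.of_bound hf (‖f a‖ + ∫ s in Icc a b, ‖g s‖)
    ((ae_restrict_iff' measurableSet_Icc).2 (Eventually.of_forall fun y hy ↦ ?_))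
  rw [hfg y hy]
  exact (norm_add_le _ _).trans
    (add_le_add_right (norm_intervalIntegral_le_setIntegral_Icc hg hy) _)

lemma L2y_sq (f : ℝ → ℂ) : L2y f ^ 2 = ∫ y in Icc (-1 : ℝ) 1, ‖f y‖ ^ 2 := by
  rw [L2y, ← Real.rpow_natCast, ← Real.rpow_mul
    (setIntegral_nonneg measurableSet_Icc fun _ _ ↦ by positivity)]
  norm_num

lemma measurable_L2y {f : ℝ → ℝ → ℂ} (hf : Measurable (Function.uncurry f)) :
    Measurable fun k ↦ L2y (f k) :=
  (StronglyMeasurable.integral_prod_right' (f := fun p : ℝ × ℝ ↦ ‖Function.uncurry f p‖ ^ 2)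
    (hf.norm.pow_const 2).stronglyMeasurable).measurable.pow_const _

lemma setIntegral_norm_le_sqrt_two_mul_L2y {g : ℝ → ℂ}
    (hg : MemLp g 2 (volume.restrict (Icc (-1 : ℝ) 1))) :
    ∫ y in Icc (-1 : ℝ) 1, ‖g y‖ ≤ √2 * L2y g := by
  have hholder := integral_mul_le_Lp_mul_Lq_of_nonneg Real.HolderConjugate.two_two
    (Eventually.of_forall fun y ↦ norm_nonneg (g y)) (Eventually.of_forall fun _ ↦ zero_le_one)
    (by simpa using hg.norm) (memLp_const (1 : ℝ))
  norm_num [Real.rpow_two] at hholder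
  rw [L2y, mul_comm, Real.sqrt_eq_rpow]
  exact hholder

lemma Linfy_nonneg (f : ℝ → ℂ) : 0 ≤ Linfy f :=
  Real.iSup_nonneg fun _ ↦ norm_nonneg _

lemma Linfy_le_setIntegral_norm {f g : ℝ → ℂ} (hf : f (-1) = 0)
    (hfg : ∀ y ∈ Icc (-1 : ℝ) 1, f y = f (-1) + ∫ s in (-1 : ℝ)..y, g s)
    (hg : IntegrableOn g (Icc (-1 : ℝ) 1)) :
    Linfy f ≤ ∫ y in Icc (-1 : ℝ) 1, ‖g y‖ := by
  have : Nonempty (Icc (-1 : ℝ) 1) := ⟨⟨0, by norm_num, by norm_num⟩⟩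
  refine ciSup_le fun ⟨y, hy⟩ ↦ ?_
  rw [hfg y hy, hf, zero_add]
  exact norm_intervalIntegral_le_setIntegral_Icc hg hy

lemma Linfy_sq_le_two_mul_L2y_sq {f g : ℝ → ℂ} (hf : f (-1) = 0)
    (hfg : ∀ y ∈ Icc (-1 : ℝ) 1, f y = f (-1) + ∫ s in (-1 : ℝ)..y, g s)
    (hg : MemLp g 2 (volume.restrict (Icc (-1 : ℝ) 1))) :
    Linfy f ^ 2 ≤ 2 * L2y g ^ 2 := by
  have hL := (Linfy_le_setIntegral_norm hf hfg (hg.integrable one_le_two)).trans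
    (setIntegral_norm_le_sqrt_two_mul_L2y hg)
  have h0 := Linfy_nonneg f
  calc Linfy f ^ 2 ≤ (√2 * L2y g) ^ 2 := by gcongr
    _ = 2 * L2y g ^ 2 := by rw [mul_pow, Real.sq_sqrt zero_le_two]

lemma measurable_gradSq {f df : ℝ → ℝ → ℂ} (hf : Measurable (Function.uncurry f))
    (hdf : Measurable (Function.uncurry df)) : Measurable fun k ↦ gradSq k (f k) (df k) :=
  ((measurable_id.pow_const 2).mul ((measurable_L2y hf).pow_const 2)).add
    ((measurable_L2y hdf).pow_const 2)

lemma Linfy_sq_le_two_mul_gradSq (k : ℝ) {f g h : ℝ → ℂ} (hf : f (-1) = 0)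
    (hfg : ∀ y ∈ Icc (-1 : ℝ) 1, f y = f (-1) + ∫ s in (-1 : ℝ)..y, g s)
    (hgh : ∀ y ∈ Icc (-1 : ℝ) 1, g y = g (-1) + ∫ s in (-1 : ℝ)..y, h s)
    (hg : AEStronglyMeasurable g (volume.restrict (Icc (-1 : ℝ) 1)))
    (hh : MemLp h 2 (volume.restrict (Icc (-1 : ℝ) 1))) :
    Linfy f ^ 2 ≤ 2 * gradSq k f g := by
  have hg2 := memLp_of_eq_add_intervalIntegral 2 hg (hh.integrable one_le_two) hgh
  have := Linfy_sq_le_two_mul_L2y_sq hf hfg hg2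
  unfold gradSq
  nlinarith [sq_nonneg k, sq_nonneg (L2y f)]

theorem lemma31_fifth (m ε : ℝ) (hm : 1 < m) (hε : ε ∈ Set.Ioo (0 : ℝ) (1 / 12)) :
    ∃ C : ℝ, 0 < C ∧
      ∀ (ν c t : ℝ), ν ∈ Set.Ioo (0 : ℝ) 1 → 0 < c → 0 ≤ t →
      ∀ (ω dω d2ω φ dφ d2φ : ℝ → ℝ → ℂ),
      Measurable (Function.uncurry ω) → Measurable (Function.uncurry dω) →
      Measurable (Function.uncurry d2ω) → Measurable (Function.uncurry φ) →
      Measurable (Function.uncurry dφ) → Measurable (Function.uncurry d2φ) →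
      (∀ k : ℝ, ω k (-1) = 0 ∧ ω k 1 = 0) →
      (∀ k : ℝ, ∀ y ∈ Set.Icc (-1 : ℝ) 1,
        ω k y = ω k (-1) + ∫ s in (-1 : ℝ)..y, dω k s) →
      (∀ k : ℝ, ∀ y ∈ Set.Icc (-1 : ℝ) 1,
        dω k y = dω k (-1) + ∫ s in (-1 : ℝ)..y, d2ω k s) →
      (∀ k : ℝ, MemLp (d2ω k) 2 (volume.restrict (Set.Icc (-1 : ℝ) 1))) →
      (∀ k : ℝ, k ≠ 0 → φ k (-1) = 0 ∧ φ k 1 = 0) →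
      (∀ k : ℝ, k ≠ 0 → ∀ y ∈ Set.Icc (-1 : ℝ) 1,
        φ k y = φ k (-1) + ∫ s in (-1 : ℝ)..y, dφ k s) →
      (∀ k : ℝ, k ≠ 0 → ∀ y ∈ Set.Icc (-1 : ℝ) 1,
        dφ k y = dφ k (-1) + ∫ s in (-1 : ℝ)..y, d2φ k s) →
      (∀ k : ℝ, k ≠ 0 → ∀ y ∈ Set.Icc (-1 : ℝ) 1,
        d2φ k y - (k : ℂ) ^ 2 * φ k y = ω k y) →
      EEn ν m ε c t ω dω ≠ ⊤ → D1n ν m ε c t ω dω ≠ ⊤ → D2n ν m ε c t dω d2ω ≠ ⊤ →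
      D3n ν m ε c t ω ≠ ⊤ → D4n ν m ε c t φ dφ ≠ ⊤ → D5n ν m ε c t dφ d2φ ≠ ⊤ →
      ∫⁻ k : ℝ, ENNReal.ofReal (Linfy (ω k)) ≤
        ENNReal.ofReal (C * ν ^ (-(1 : ℝ) / 2)) * (D1n ν m ε c t ω dω) ^ ((1 : ℝ) / 2) := by
  refine ⟨√(2 * Real.pi), by positivity, ?_⟩
  intro ν c t ⟨hν, _⟩ hc ht ω dω d2ω φ dφ d2φ hω hdω _ _ _ _ hω_bc hω_dω hdω_d2ω hd2ω
    _ _ _ _ _ _ _ _ _ _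
  set W := Wf ν m ε c t
  have hW (k : ℝ) : 1 + k ^ 2 ≤ W k := one_add_sq_le_Wf hν.le hm.le hε.1.le hc.le ht k
  have hpt (k : ℝ) : ENNReal.ofReal (Linfy (ω k)) ^ 2 ≤
      ENNReal.ofReal (2 / ν * (W k)⁻¹) * ENNReal.ofReal (W k * (ν * gradSq k (ω k) (dω k))) := by
    have hWk : 0 < W k := (by positivity : (0 : ℝ) < 1 + k ^ 2).trans_le (hW k)
    rw [← ENNReal.ofReal_pow (Linfy_nonneg _), ← ENNReal.ofReal_mul (by positivity)]
    refine ENNReal.ofReal_le_ofReal ((Linfy_sq_le_two_mul_gradSq k (hω_bc k).1 (hω_dω k)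
      (hdω_d2ω k) hdω.of_uncurry_left.aestronglyMeasurable (hd2ω k)).trans_eq ?_)
    field_simp
  have hmeas_D1 : Measurable fun k ↦ ENNReal.ofReal (W k * (ν * gradSq k (ω k) (dω k))) :=
    ((measurable_Wf ν m ε c t).mul ((measurable_gradSq hω hdω).const_mul ν)).ennreal_ofReal
  calc ∫⁻ k, ENNReal.ofReal (Linfy (ω k))
      ≤ (∫⁻ k, ENNReal.ofReal (2 / ν * (W k)⁻¹)) ^ (1 / 2 : ℝ) *
          D1n ν m ε c t ω dω ^ (1 / 2 : ℝ) :=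
        lintegral_le_sqrt_mul_sqrt
          ((measurable_Wf ν m ε c t).inv.const_mul _).ennreal_ofReal.aemeasurable
          hmeas_D1.aemeasurable hpt
    _ ≤ ENNReal.ofReal (2 / ν * Real.pi) ^ (1 / 2 : ℝ) * D1n ν m ε c t ω dω ^ (1 / 2 : ℝ) := by
      gcongr
      exact lintegral_ofReal_mul_inv_le_mul_pi (by positivity) hW
    _ = ENNReal.ofReal (√(2 * Real.pi) * ν ^ (-(1 : ℝ) / 2)) * D1n ν m ε c t ω dω ^ (1 / 2 : ℝ) := by
      rw [ENNReal.ofReal_rpow_of_nonneg (by positivity) (by norm_num), Real.sqrt_eq_rpow, neg_div,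
        Real.rpow_neg hν.le, ← Real.inv_rpow hν.le, ← Real.mul_rpow (by positivity) (by positivity)]
      ring_nf

end
end

section
/- Under the standing assumptions, ∫_{{|ℓ| ≥ ν}} W(ℓ) |ℓ|^{7/3} ‖∂_y φ_ℓ‖²_{L^∞_y([-1,1])} dℓ ≲ ν^{-2/3}·𝓓₅. (First estimate of Lemma 3.3.) -/
open MeasureTheory Set Filter Topology
open scoped ENNReal

noncomputable section

/-!
For `ν ≤ |ℓ|` one has `ν^{-2/3} α(ℓ) ℓ² = |ℓ|^{4/3}`, so it suffices to prove, frequency by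
frequency, `|ℓ| ‖∂_y φ_ℓ‖²_∞ ≤ ℓ² ‖∂_y φ_ℓ‖² + ‖∂_y² φ_ℓ‖²`. Because `φ_ℓ(±1) = 0`, `∂_y φ_ℓ`
has mean zero, so its real and imaginary parts each vanish somewhere in `[-1,1]`. Integrating
`(g²)' = 2 g g'` (valid for absolutely continuous `g`) from such a zero gives the Agmon-type bound
`‖∂_y φ_ℓ‖²_∞ ≤ 2 ‖∂_y φ_ℓ‖ ‖∂_y² φ_ℓ‖`, and AM-GM concludes. The equation
`∂_y² φ_ℓ = ω_ℓ + ℓ² φ_ℓ` makes `∂_y² φ_ℓ` continuous, hence square integrable on `[-1,1]`.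
-/

open scoped Interval

section Primitive

variable {a b : ℝ} {E : Type*} [NormedAddCommGroup E]

theorem ContinuousOn.memLp_restrict_Icc {f : ℝ → E}
    (hf : ContinuousOn f (Icc a b)) (p : ℝ≥0∞) : MemLp f p (volume.restrict (Icc a b)) := by
  obtain ⟨C, hC⟩ := isCompact_Icc.exists_bound_of_continuousOn hf
  exact MemLp.of_bound (hf.aestronglyMeasurable measurableSet_Icc) C
    ((ae_restrict_iff' measurableSet_Icc).2 (Eventually.of_forall hC))

theorem continuousOn_Icc_of_eq_add_integral [NormedSpace ℝ E] {g h : ℝ → E}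
    (hh : IntegrableOn h (Icc a b))
    (hg : ∀ y ∈ Icc a b, g y = g a + ∫ s in a..y, h s) : ContinuousOn g (Icc a b) := by
  rcases le_or_gt a b with hab | hba
  · have hprim := intervalIntegral.continuousOn_primitive_interval (μ := volume)
      (a := a) (b := b) (f := h) (by rwa [uIcc_of_le hab])
    rw [uIcc_of_le hab] at hprim
    exact (continuousOn_const.add hprim).congr hg
  · simp [Icc_eq_empty_of_lt hba]

theorem sq_sub_sq_eq_two_mul_integral {g h : ℝ → ℝ} (hh : IntegrableOn h (Icc a b))
    (hg : ∀ y ∈ Icc a b, g y = g a + ∫ s in a..y, h s) {y z : ℝ} (hy : y ∈ Icc a b)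
    (hz : z ∈ Icc a b) : g y ^ 2 - g z ^ 2 = 2 * ∫ s in z..y, g s * h s := by
  have hab : a ≤ b := hy.1.trans hy.2
  have hzy : uIcc z y ⊆ Icc a b := ordConnected_Icc.uIcc_subset hz hy
  have hhab : IntervalIntegrable h volume a b :=
    (intervalIntegrable_iff_integrableOn_Icc_of_le hab).2 hh
  set G : ℝ → ℝ := fun x => g a + ∫ s in a..x, h s
  have hG : AbsolutelyContinuousOnInterval G z y :=
    ((LipschitzWith.const (g a)).lipschitzOnWith.absolutelyContinuousOnInterval.add
      (hhab.absolutelyContinuousOnInterval_intervalIntegral left_mem_uIcc)).mono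
      (by rwa [uIcc_of_le hab])
  have hGg : ∀ x ∈ Icc a b, G x = g x := fun x hx => (hg x hx).symm
  have hderiv : ∀ᵐ x, x ∈ uIoc z y → deriv G x = h x ∧ G x = g x := by
    filter_upwards [hhab.ae_hasDerivAt_integral] with x hx hxzy
    have hxab : x ∈ Icc a b := hzy (uIoc_subset_uIcc hxzy)
    rw [uIcc_of_le hab] at hx
    exact ⟨((hx hxab a (left_mem_Icc.2 hab)).const_add (g a)).deriv, hGg x hxab⟩
  have hparts := hG.integral_deriv_mul_eq_sub hG
  rw [hGg y hy, hGg z hz] at hparts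
  rw [← intervalIntegral.integral_const_mul, sq, sq, ← hparts]
  refine intervalIntegral.integral_congr_ae ?_
  filter_upwards [hderiv] with x hx hxzy
  rw [(hx hxzy).1, (hx hxzy).2]
  ring

theorem sq_le_two_mul_integral_abs_mul_abs {g h : ℝ → ℝ} (hh : IntegrableOn h (Icc a b))
    (hg : ∀ y ∈ Icc a b, g y = g a + ∫ s in a..y, h s) {y z : ℝ} (hy : y ∈ Icc a b)
    (hz : z ∈ Icc a b) (hgz : g z = 0) : g y ^ 2 ≤ 2 * ∫ s in Icc a b, |g s| * |h s| := by
  have hgh : IntegrableOn (fun s => |g s| * |h s|) (Icc a b) :=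
    IntegrableOn.continuousOn_mul (continuousOn_Icc_of_eq_add_integral hh hg).abs hh.abs
      isCompact_Icc
  have hsq := sq_sub_sq_eq_two_mul_integral hh hg hy hz
  rw [hgz, zero_pow two_ne_zero, sub_zero] at hsq
  rw [hsq]
  gcongr
  calc ∫ s in z..y, g s * h s ≤ ∫ s in Ι z y, ‖g s * h s‖ :=
        (Real.le_norm_self _).trans intervalIntegral.norm_integral_le_integral_norm_uIoc
    _ = ∫ s in Ι z y, |g s| * |h s| := by simp only [norm_mul, Real.norm_eq_abs]
    _ ≤ ∫ s in Icc a b, |g s| * |h s| :=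
        setIntegral_mono_set hgh (Eventually.of_forall fun s => by positivity)
          ((uIoc_subset_uIcc.trans (ordConnected_Icc.uIcc_subset hz hy)).eventuallyLE)

variable [NormedSpace ℝ E] [CompleteSpace E]

theorem exists_clm_eq_zero_of_intervalIntegral_eq_zero (L : E →L[ℝ] ℝ) {f : ℝ → E}
    (hab : a < b) (hf : ContinuousOn f (Icc a b)) (hmean : ∫ s in a..b, f s = 0) :
    ∃ z ∈ Icc a b, L (f z) = 0 := by
  rw [← uIcc_of_le hab.le] at hf
  obtain ⟨z, hz, hLz⟩ := exists_eq_interval_average hab.ne (L.continuous.comp_continuousOn hf)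
  refine ⟨z, uIcc_of_le hab.le ▸ uIoo_subset_uIcc_self hz, ?_⟩
  simp only [Function.comp_def] at hLz
  rw [hLz, interval_average_eq_div,
    L.intervalIntegral_comp_comm (hf.intervalIntegrable), hmean, map_zero, zero_div]

theorem clm_sq_le_two_mul_integral_abs_mul_abs (L : E →L[ℝ] ℝ) {f h : ℝ → E} (hab : a < b)
    (hh : IntegrableOn h (Icc a b)) (hf : ∀ y ∈ Icc a b, f y = f a + ∫ s in a..y, h s)
    (hmean : ∫ s in a..b, f s = 0) {y : ℝ} (hy : y ∈ Icc a b) :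
    L (f y) ^ 2 ≤ 2 * ∫ s in Icc a b, |L (f s)| * |L (h s)| := by
  have hLf : ∀ y ∈ Icc a b, L (f y) = L (f a) + ∫ s in a..y, L (h s) := fun y hy => by
    rw [hf y hy, map_add, L.intervalIntegral_comp_comm
      ((intervalIntegrable_iff_integrableOn_Icc_of_le hy.1).2
        (hh.mono_set (Icc_subset_Icc_right hy.2)))]
  obtain ⟨z, hz, hLz⟩ := exists_clm_eq_zero_of_intervalIntegral_eq_zero L hab
    (continuousOn_Icc_of_eq_add_integral hh hf) hmean
  exact sq_le_two_mul_integral_abs_mul_abs (L.integrable_comp hh) hLf hy hz hLz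

end Primitive

theorem Complex.abs_re_mul_abs_re_add_abs_im_mul_abs_im_le (z w : ℂ) :
    |z.re| * |w.re| + |z.im| * |w.im| ≤ ‖z‖ * ‖w‖ := by
  refine le_of_pow_le_pow_left₀ two_ne_zero (by positivity) ?_
  rw [mul_pow, Complex.sq_norm, Complex.sq_norm, Complex.normSq_apply, Complex.normSq_apply]
  nlinarith [sq_nonneg (|z.re| * |w.im| - |z.im| * |w.re|), sq_abs z.re, sq_abs z.im,
    sq_abs w.re, sq_abs w.im]

theorem norm_sq_le_two_mul_integral_norm_mul_norm {a b : ℝ} {f h : ℝ → ℂ} (hab : a < b)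
    (hh : IntegrableOn h (Icc a b)) (hf : ∀ y ∈ Icc a b, f y = f a + ∫ s in a..y, h s)
    (hmean : ∫ s in a..b, f s = 0) {y : ℝ} (hy : y ∈ Icc a b) :
    ‖f y‖ ^ 2 ≤ 2 * ∫ s in Icc a b, ‖f s‖ * ‖h s‖ := by
  have hfc := continuousOn_Icc_of_eq_add_integral hh hf
  have hint (L : ℂ →L[ℝ] ℝ) : IntegrableOn (fun s => |L (f s)| * |L (h s)|) (Icc a b) :=
    IntegrableOn.continuousOn_mul (L.continuous.comp_continuousOn hfc).abs
      (L.integrable_comp hh).abs isCompact_Icc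
  have hre := clm_sq_le_two_mul_integral_abs_mul_abs Complex.reCLM hab hh hf hmean hy
  have him := clm_sq_le_two_mul_integral_abs_mul_abs Complex.imCLM hab hh hf hmean hy
  calc ‖f y‖ ^ 2 = Complex.reCLM (f y) ^ 2 + Complex.imCLM (f y) ^ 2 := by
        rw [Complex.sq_norm, Complex.normSq_apply]
        simp only [Complex.reCLM_apply, Complex.imCLM_apply, sq]
    _ ≤ 2 * ∫ s in Icc a b, (|Complex.reCLM (f s)| * |Complex.reCLM (h s)|
          + |Complex.imCLM (f s)| * |Complex.imCLM (h s)|) := by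
        rw [integral_add (hint _) (hint _)]
        linarith
    _ ≤ 2 * ∫ s in Icc a b, ‖f s‖ * ‖h s‖ := by
        refine mul_le_mul_of_nonneg_left (setIntegral_mono_on ((hint _).add (hint _))
          (IntegrableOn.continuousOn_mul hfc.norm hh.norm isCompact_Icc) measurableSet_Icc
          fun s _ => Complex.abs_re_mul_abs_re_add_abs_im_mul_abs_im_le (f s) (h s)) zero_le_two

theorem L2y_nonneg (f : ℝ → ℂ) : 0 ≤ L2y f :=
  Real.rpow_nonneg (integral_nonneg fun _ => sq_nonneg _) _

theorem integral_norm_mul_norm_le_L2y_mul_L2y {f g : ℝ → ℂ}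
    (hf : MemLp f 2 (volume.restrict (Icc (-1) 1)))
    (hg : MemLp g 2 (volume.restrict (Icc (-1) 1))) :
    ∫ y in Icc (-1 : ℝ) 1, ‖f y‖ * ‖g y‖ ≤ L2y f * L2y g := by
  have := integral_mul_norm_le_Lp_mul_Lq (f := f) (g := g) Real.HolderConjugate.two_two
    (by rwa [ENNReal.ofReal_ofNat]) (by rwa [ENNReal.ofReal_ofNat])
  simpa only [L2y, Real.rpow_two] using this

theorem Linfy_sq_le_two_mul_L2y_mul_L2y {f h : ℝ → ℂ}
    (hh : MemLp h 2 (volume.restrict (Icc (-1) 1)))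
    (hf : ∀ y ∈ Icc (-1 : ℝ) 1, f y = f (-1) + ∫ s in (-1 : ℝ)..y, h s)
    (hmean : ∫ s in (-1 : ℝ)..1, f s = 0) : Linfy f ^ 2 ≤ 2 * (L2y f * L2y h) := by
  have hh1 : IntegrableOn h (Icc (-1) 1) := hh.integrable one_le_two
  have hfL2 := (continuousOn_Icc_of_eq_add_integral hh1 hf).memLp_restrict_Icc 2
  have hbound (y : Icc (-1 : ℝ) 1) : ‖f y‖ ^ 2 ≤ 2 * (L2y f * L2y h) :=
    (norm_sq_le_two_mul_integral_norm_mul_norm (by norm_num) hh1 hf hmean y.2).trans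
      (by gcongr; exact integral_norm_mul_norm_le_L2y_mul_L2y hfL2 hh)
  have hB : 0 ≤ 2 * (L2y f * L2y h) := by
    have := L2y_nonneg f; have := L2y_nonneg h; positivity
  calc Linfy f ^ 2 ≤ √(2 * (L2y f * L2y h)) ^ 2 := by
        gcongr
        · exact Real.iSup_nonneg fun _ => norm_nonneg _
        · exact Real.iSup_le (fun y => Real.le_sqrt_of_sq_le (hbound y)) (Real.sqrt_nonneg _)
    _ = 2 * (L2y f * L2y h) := Real.sq_sqrt hB

theorem abs_mul_Linfy_sq_le_gradSq (k : ℝ) {f h : ℝ → ℂ}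
    (hh : MemLp h 2 (volume.restrict (Icc (-1) 1)))
    (hf : ∀ y ∈ Icc (-1 : ℝ) 1, f y = f (-1) + ∫ s in (-1 : ℝ)..y, h s)
    (hmean : ∫ s in (-1 : ℝ)..1, f s = 0) : |k| * Linfy f ^ 2 ≤ gradSq k f h := by
  calc |k| * Linfy f ^ 2 ≤ |k| * (2 * (L2y f * L2y h)) := by
        gcongr; exact Linfy_sq_le_two_mul_L2y_mul_L2y hh hf hmean
    _ ≤ gradSq k f h := by
        rw [gradSq, ← sq_abs k]
        nlinarith [sq_nonneg (|k| * L2y f - L2y h)]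

theorem abs_mul_Linfy_sq_le_gradSq_of_poisson (k : ℝ) {ω dω d2ω φ dφ d2φ : ℝ → ℂ}
    (hdφm : Measurable dφ) (hφbc : φ (-1) = 0 ∧ φ 1 = 0)
    (hφ : ∀ y ∈ Icc (-1 : ℝ) 1, φ y = φ (-1) + ∫ s in (-1 : ℝ)..y, dφ s)
    (hdφ : ∀ y ∈ Icc (-1 : ℝ) 1, dφ y = dφ (-1) + ∫ s in (-1 : ℝ)..y, d2φ s)
    (hd2ω : IntegrableOn d2ω (Icc (-1) 1))
    (hdω : ∀ y ∈ Icc (-1 : ℝ) 1, dω y = dω (-1) + ∫ s in (-1 : ℝ)..y, d2ω s)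
    (hω : ∀ y ∈ Icc (-1 : ℝ) 1, ω y = ω (-1) + ∫ s in (-1 : ℝ)..y, dω s)
    (hpoisson : ∀ y ∈ Icc (-1 : ℝ) 1, d2φ y - (k : ℂ) ^ 2 * φ y = ω y) :
    |k| * Linfy dφ ^ 2 ≤ gradSq k dφ d2φ := by
  -- `Linfy` is a real `iSup`, hence `0` for an unbounded family.
  by_cases hbdd : BddAbove (range fun y : Icc (-1 : ℝ) 1 => ‖dφ y‖)
  · obtain ⟨M, hM⟩ := hbdd
    have hdφi : IntegrableOn dφ (Icc (-1) 1) :=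
      IntegrableOn.of_bound measure_Icc_lt_top hdφm.aestronglyMeasurable M
        ((ae_restrict_iff' measurableSet_Icc).2
          (Eventually.of_forall fun y hy => hM ⟨⟨y, hy⟩, rfl⟩))
    have hωc : ContinuousOn ω (Icc (-1) 1) := continuousOn_Icc_of_eq_add_integral
      ((continuousOn_Icc_of_eq_add_integral hd2ω hdω).integrableOn_Icc) hω
    have hφc := continuousOn_Icc_of_eq_add_integral hdφi hφ
    have hd2φc : ContinuousOn d2φ (Icc (-1) 1) :=
      (hωc.add ((continuousOn_const (c := (k : ℂ) ^ 2)).mul hφc)).congr fun y hy => by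
        simp only [Pi.add_apply, Pi.mul_apply, ← hpoisson y hy]; ring
    have hmean : ∫ s in (-1 : ℝ)..1, dφ s = 0 := by
      simpa [hφbc.1, hφbc.2] using (hφ 1 (right_mem_Icc.2 (by norm_num))).symm
    exact abs_mul_Linfy_sq_le_gradSq k (hd2φc.memLp_restrict_Icc 2) hdφ hmean
  · rw [Linfy, Real.iSup_of_not_bddAbove hbdd, gradSq, zero_pow two_ne_zero, mul_zero]
    positivity

theorem rpow_neg_two_thirds_mul_alphf_mul_sq {ν l : ℝ} (hν : 0 < ν) (hl : ν ≤ |l|) :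
    ν ^ (-(2 : ℝ) / 3) * (alphf ν l * l ^ 2) = |l| ^ ((4 : ℝ) / 3) := by
  have hl0 : 0 < |l| := hν.trans_le hl
  rw [alphf, if_pos hl, ← sq_abs l, ← Real.rpow_natCast]
  calc ν ^ (-(2 : ℝ) / 3) *
        (ν ^ ((2 : ℝ) / 3) * |l| ^ (-((2 : ℝ) / 3)) * |l| ^ ((2 : ℕ) : ℝ))
      = ν ^ (-(2 : ℝ) / 3 + 2 / 3) * |l| ^ (-((2 : ℝ) / 3) + (2 : ℕ)) := by
        rw [Real.rpow_add hν, Real.rpow_add hl0]; ring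
    _ = |l| ^ ((4 : ℝ) / 3) := by norm_num

theorem Wf_mul_rpow_seven_thirds_le {ν m ε c t l X G : ℝ} (hν : 0 < ν) (hl : ν ≤ |l|)
    (hXG : |l| * X ≤ G) :
    Wf ν m ε c t l * (|l| ^ ((7 : ℝ) / 3) * X) ≤
      ν ^ (-(2 : ℝ) / 3) * (Wf ν m ε c t l * (alphf ν l * l ^ 2 * G)) := by
  have hl0 : 0 < |l| := hν.trans_le hl
  have hW : 0 ≤ Wf ν m ε c t l := by rw [Wf]; positivity
  calc Wf ν m ε c t l * (|l| ^ ((7 : ℝ) / 3) * X)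
      = Wf ν m ε c t l * (|l| ^ ((4 : ℝ) / 3) * (|l| * X)) := by
        rw [show (7 : ℝ) / 3 = 4 / 3 + 1 by norm_num, Real.rpow_add hl0, Real.rpow_one]; ring
    _ ≤ Wf ν m ε c t l * (|l| ^ ((4 : ℝ) / 3) * G) := by gcongr
    _ = ν ^ (-(2 : ℝ) / 3) * (Wf ν m ε c t l * (alphf ν l * l ^ 2 * G)) := by
        rw [← rpow_neg_two_thirds_mul_alphf_mul_sq hν hl]; ring

theorem lemma33_first_general (m ε : ℝ) :
    ∃ C : ℝ, 0 < C ∧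
      ∀ (ν c t : ℝ), ν ∈ Set.Ioo (0 : ℝ) 1 → 0 < c → 0 ≤ t →
      ∀ (ω dω d2ω φ dφ d2φ : ℝ → ℝ → ℂ),
      Measurable (Function.uncurry ω) → Measurable (Function.uncurry dω) →
      Measurable (Function.uncurry d2ω) → Measurable (Function.uncurry φ) →
      Measurable (Function.uncurry dφ) → Measurable (Function.uncurry d2φ) →
      (∀ k : ℝ, ω k (-1) = 0 ∧ ω k 1 = 0) →
      (∀ k : ℝ, ∀ y ∈ Set.Icc (-1 : ℝ) 1,
        ω k y = ω k (-1) + ∫ s in (-1 : ℝ)..y, dω k s) →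
      (∀ k : ℝ, ∀ y ∈ Set.Icc (-1 : ℝ) 1,
        dω k y = dω k (-1) + ∫ s in (-1 : ℝ)..y, d2ω k s) →
      (∀ k : ℝ, MemLp (d2ω k) 2 (volume.restrict (Set.Icc (-1 : ℝ) 1))) →
      (∀ k : ℝ, k ≠ 0 → φ k (-1) = 0 ∧ φ k 1 = 0) →
      (∀ k : ℝ, k ≠ 0 → ∀ y ∈ Set.Icc (-1 : ℝ) 1,
        φ k y = φ k (-1) + ∫ s in (-1 : ℝ)..y, dφ k s) →
      (∀ k : ℝ, k ≠ 0 → ∀ y ∈ Set.Icc (-1 : ℝ) 1,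
        dφ k y = dφ k (-1) + ∫ s in (-1 : ℝ)..y, d2φ k s) →
      (∀ k : ℝ, k ≠ 0 → ∀ y ∈ Set.Icc (-1 : ℝ) 1,
        d2φ k y - (k : ℂ) ^ 2 * φ k y = ω k y) →
      EEn ν m ε c t ω dω ≠ ⊤ → D1n ν m ε c t ω dω ≠ ⊤ → D2n ν m ε c t dω d2ω ≠ ⊤ →
      D3n ν m ε c t ω ≠ ⊤ → D4n ν m ε c t φ dφ ≠ ⊤ → D5n ν m ε c t dφ d2φ ≠ ⊤ →
      ∫⁻ l in {l : ℝ | ν ≤ |l|},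
          ENNReal.ofReal (Wf ν m ε c t l * (|l| ^ ((7 : ℝ) / 3) * (Linfy (dφ l)) ^ 2)) ≤
        ENNReal.ofReal (C * ν ^ (-(2 : ℝ) / 3)) * D5n ν m ε c t dφ d2φ := by
  refine ⟨1, one_pos, ?_⟩
  intro ν c t hν _ _ ω dω d2ω φ dφ d2φ _ _ _ _ hdφm _ _ hω hdω hd2ω hφbc hφ hdφ hpoisson
    _ _ _ _ _ _
  have hpoint : ∀ l ∈ {l : ℝ | ν ≤ |l|},
      ENNReal.ofReal (Wf ν m ε c t l * (|l| ^ ((7 : ℝ) / 3) * Linfy (dφ l) ^ 2)) ≤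
        ENNReal.ofReal (ν ^ (-(2 : ℝ) / 3)) *
          ENNReal.ofReal (Wf ν m ε c t l * (alphf ν l * l ^ 2 * gradSq l (dφ l) (d2φ l))) := by
    intro l (hl : ν ≤ |l|)
    have hl0 : l ≠ 0 := abs_pos.1 (hν.1.trans_le hl)
    rw [← ENNReal.ofReal_mul (Real.rpow_nonneg hν.1.le _)]
    exact ENNReal.ofReal_le_ofReal <| Wf_mul_rpow_seven_thirds_le hν.1 hl <|
      abs_mul_Linfy_sq_le_gradSq_of_poisson l (hdφm.comp measurable_prodMk_left)
        (hφbc l hl0) (hφ l hl0) (hdφ l hl0) ((hd2ω l).integrable one_le_two) (hdω l) (hω l)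
        (hpoisson l hl0)
  calc ∫⁻ l in {l : ℝ | ν ≤ |l|},
        ENNReal.ofReal (Wf ν m ε c t l * (|l| ^ ((7 : ℝ) / 3) * Linfy (dφ l) ^ 2))
      ≤ ∫⁻ l in {l : ℝ | ν ≤ |l|}, ENNReal.ofReal (ν ^ (-(2 : ℝ) / 3)) *
          ENNReal.ofReal (Wf ν m ε c t l * (alphf ν l * l ^ 2 * gradSq l (dφ l) (d2φ l))) :=
        setLIntegral_mono' (measurableSet_le measurable_const measurable_abs) hpoint
    _ ≤ ∫⁻ l, ENNReal.ofReal (ν ^ (-(2 : ℝ) / 3)) *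
          ENNReal.ofReal (Wf ν m ε c t l * (alphf ν l * l ^ 2 * gradSq l (dφ l) (d2φ l))) :=
        setLIntegral_le_lintegral _ _
    _ = ENNReal.ofReal (1 * ν ^ (-(2 : ℝ) / 3)) * D5n ν m ε c t dφ d2φ := by
        rw [lintegral_const_mul' _ _ ENNReal.ofReal_ne_top, one_mul, D5n]

theorem lemma33_first (m ε : ℝ) (hm : 1 < m) (hε : ε ∈ Set.Ioo (0 : ℝ) (1 / 12)) :
    ∃ C : ℝ, 0 < C ∧
      ∀ (ν c t : ℝ), ν ∈ Set.Ioo (0 : ℝ) 1 → 0 < c → 0 ≤ t →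
      ∀ (ω dω d2ω φ dφ d2φ : ℝ → ℝ → ℂ),
      Measurable (Function.uncurry ω) → Measurable (Function.uncurry dω) →
      Measurable (Function.uncurry d2ω) → Measurable (Function.uncurry φ) →
      Measurable (Function.uncurry dφ) → Measurable (Function.uncurry d2φ) →
      (∀ k : ℝ, ω k (-1) = 0 ∧ ω k 1 = 0) →
      (∀ k : ℝ, ∀ y ∈ Set.Icc (-1 : ℝ) 1,
        ω k y = ω k (-1) + ∫ s in (-1 : ℝ)..y, dω k s) →
      (∀ k : ℝ, ∀ y ∈ Set.Icc (-1 : ℝ) 1,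
        dω k y = dω k (-1) + ∫ s in (-1 : ℝ)..y, d2ω k s) →
      (∀ k : ℝ, MemLp (d2ω k) 2 (volume.restrict (Set.Icc (-1 : ℝ) 1))) →
      (∀ k : ℝ, k ≠ 0 → φ k (-1) = 0 ∧ φ k 1 = 0) →
      (∀ k : ℝ, k ≠ 0 → ∀ y ∈ Set.Icc (-1 : ℝ) 1,
        φ k y = φ k (-1) + ∫ s in (-1 : ℝ)..y, dφ k s) →
      (∀ k : ℝ, k ≠ 0 → ∀ y ∈ Set.Icc (-1 : ℝ) 1,
        dφ k y = dφ k (-1) + ∫ s in (-1 : ℝ)..y, d2φ k s) →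
      (∀ k : ℝ, k ≠ 0 → ∀ y ∈ Set.Icc (-1 : ℝ) 1,
        d2φ k y - (k : ℂ) ^ 2 * φ k y = ω k y) →
      EEn ν m ε c t ω dω ≠ ⊤ → D1n ν m ε c t ω dω ≠ ⊤ → D2n ν m ε c t dω d2ω ≠ ⊤ →
      D3n ν m ε c t ω ≠ ⊤ → D4n ν m ε c t φ dφ ≠ ⊤ → D5n ν m ε c t dφ d2φ ≠ ⊤ →
      ∫⁻ l in {l : ℝ | ν ≤ |l|},
          ENNReal.ofReal (Wf ν m ε c t l * (|l| ^ ((7 : ℝ) / 3) * (Linfy (dφ l)) ^ 2)) ≤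
        ENNReal.ofReal (C * ν ^ (-(2 : ℝ) / 3)) * D5n ν m ε c t dφ d2φ :=
  lemma33_first_general m ε
end
end
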